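/- Let C be a cotilting right R-module with cotilting torsion pair (Q, C) and let 0 → L →a M →b N → 0 be a short exact sequence in Mod-R. The following are equivalent: (a) N is a torsion, almost torsion-free module and b is a special C-cover of N in Mod-R; (b) L ∈ Prod(C) and a is a strong left almost split morphism in the full subcategory C of Mod-R. -/

import Mathlib

open CategoryTheory Limits

universe w u

namespace Paper

variable {R : Type u} [Ring R]

/-- `Ext¹(M, N) = 0`: every short exact sequence `0 → N → E → M → 0` splits. -/
def Ext1Vanish (M N : ModuleCat.{u} R) : Prop :=
  ∀ (E : ModuleCat.{u} R) (i : N ⟶ E) (p : E ⟶ M) (w : i ≫ p = 0),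
    (ShortComplex.mk i p w).ShortExact → ∃ s : M ⟶ E, s ≫ p = 𝟙 M

/-- `X ∈ Prod(C)`: `X` is a direct summand of a product of copies of `C`. -/
def MemProd (C X : ModuleCat.{u} R) : Prop :=
  ∃ (ι : Type u) (s : X ⟶ ModuleCat.of R (ι → C)) (r : ModuleCat.of R (ι → C) ⟶ X),
    s ≫ r = 𝟙 X

/-- An injective cogenerator of `Mod R`. -/
def IsInjectiveCogenerator (I : ModuleCat.{u} R) : Prop :=
  Injective I ∧
    ∀ X : ModuleCat.{u} R, ∃ (ι : Type u) (m : X ⟶ ModuleCat.of R (ι → I)), Mono m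

/-- A (1-)cotilting module: injective dimension at most 1, `Ext¹(Cᵏ, C) = 0` for all
products, and an exact sequence `0 → C₁ → C₀ → I → 0` with `C₀, C₁ ∈ Prod(C)` and `I` an
injective cogenerator. -/
structure IsCotilting (C : ModuleCat.{u} R) : Prop where
  injdim_le_one : ∃ (I₀ I₁ : ModuleCat.{u} R) (i : C ⟶ I₀) (p : I₀ ⟶ I₁) (w : i ≫ p = 0),
    Injective I₀ ∧ Injective I₁ ∧ (ShortComplex.mk i p w).ShortExact
  ext_prod_vanish : ∀ ι : Type u, Ext1Vanish (ModuleCat.of R (ι → C)) C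
  exists_coseq : ∃ (C₁ C₀ I : ModuleCat.{u} R) (i : C₁ ⟶ C₀) (p : C₀ ⟶ I) (w : i ≫ p = 0),
    MemProd C C₁ ∧ MemProd C C₀ ∧ IsInjectiveCogenerator I ∧
      (ShortComplex.mk i p w).ShortExact

/-- The cotilting class `𝒞 = ⊥₁C = Cogen C`. -/
def cotiltClass (C : ModuleCat.{u} R) : Set (ModuleCat.{u} R) := {M | Ext1Vanish M C}

/-- The torsion class `𝒬 = ⊥₀C` of the cotilting torsion pair. -/
def cotiltTors (C : ModuleCat.{u} R) : Set (ModuleCat.{u} R) := {M | ∀ f : M ⟶ C, f = 0}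

/-- The right Ext-orthogonal class `S^⊥₁`. -/
def perp1 (S : Set (ModuleCat.{u} R)) : Set (ModuleCat.{u} R) :=
  {N | ∀ Y ∈ S, Ext1Vanish Y N}

/-- A special `S`-cover: an epimorphism from an object of `S` with kernel in `S^⊥₁`,
which is right minimal. -/
def IsSpecialCover (S : Set (ModuleCat.{u} R)) {Y M : ModuleCat.{u} R} (b : Y ⟶ M) :
    Prop :=
  Y ∈ S ∧ Epi b ∧ ModuleCat.of R (LinearMap.ker b.hom) ∈ perp1 S ∧
    ∀ h : Y ⟶ Y, h ≫ b = b → IsIso h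

/-- A special `S^⊥₁`-envelope: a monomorphism into an object of `S^⊥₁` with cokernel in
`S`, which is left minimal. -/
def IsSpecialEnvelope (S : Set (ModuleCat.{u} R)) {M X : ModuleCat.{u} R} (a : M ⟶ X) :
    Prop :=
  X ∈ perp1 S ∧ Mono a ∧ ModuleCat.of R (X ⧸ LinearMap.range a.hom) ∈ S ∧
    ∀ h : X ⟶ X, a ≫ h = a → IsIso h

/-- `f` is a left almost split morphism in the full subcategory of objects satisfying `P`. -/
def LeftAlmostSplitIn {D : Type*} [Category D] (P : D → Prop) {X Y : D} (f : X ⟶ Y) :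
    Prop :=
  ¬ IsSplitMono f ∧
    ∀ ⦃Z : D⦄, P Z → ∀ g : X ⟶ Z, ¬ IsSplitMono g → ∃ h : Y ⟶ Z, f ≫ h = g

/-- A strong left almost split morphism: the factorization is moreover unique. -/
def StrongLeftAlmostSplitIn {D : Type*} [Category D] (P : D → Prop) {X Y : D}
    (f : X ⟶ Y) : Prop :=
  ¬ IsSplitMono f ∧
    ∀ ⦃Z : D⦄, P Z → ∀ g : X ⟶ Z, ¬ IsSplitMono g → ∃! h : Y ⟶ Z, f ≫ h = g

/-- A nonzero module is almost torsion-free if every proper submodule is torsion-free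
(ATF1) and (ATF2) holds. -/
def AlmostTorsionFree (tors free : Set (ModuleCat.{u} R)) (T₀ : ModuleCat.{u} R) : Prop :=
  Nontrivial T₀ ∧
  (∀ N : Submodule R T₀, N ≠ ⊤ → ModuleCat.of R N ∈ free) ∧
  (∀ (A B : ModuleCat.{u} R) (i : A ⟶ B) (p : B ⟶ T₀) (w : i ≫ p = 0),
    (ShortComplex.mk i p w).ShortExact → B ∈ tors → A ∈ tors)

/-- A nonzero module is almost torsion if every proper quotient is torsion (AT1) and
(AT2) holds. -/
def AlmostTorsion (tors free : Set (ModuleCat.{u} R)) (F₀ : ModuleCat.{u} R) : Prop :=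
  Nontrivial F₀ ∧
  (∀ N : Submodule R F₀, N ≠ ⊥ → ModuleCat.of R (F₀ ⧸ N) ∈ tors) ∧
  (∀ (A B : ModuleCat.{u} R) (i : F₀ ⟶ A) (p : A ⟶ B) (w : i ≫ p = 0),
    (ShortComplex.mk i p w).ShortExact → A ∈ free → B ∈ free)

/-! ### Auxiliary infrastructure -/

section Aux

variable {C : ModuleCat.{u} R}

lemma comp_app' {X Y Z : ModuleCat.{u} R} (f : X ⟶ Y) (g : Y ⟶ Z) (x : X) :
    (f ≫ g) x = g (f x) := rfl

/-- Build a short exact complex in `ModuleCat` from elementwise data. -/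
lemma mkSES {A B X : ModuleCat.{u} R} (i : A ⟶ B) (p : B ⟶ X) (w : i ≫ p = 0)
    (hi : Function.Injective i) (hp : Function.Surjective p)
    (hk : ∀ x, p x = 0 → ∃ a, i a = x) : (ShortComplex.mk i p w).ShortExact := by
  have h1 : Mono (ShortComplex.mk i p w).f := (ModuleCat.mono_iff_injective i).2 hi
  have h2 : Epi (ShortComplex.mk i p w).g := (ModuleCat.epi_iff_surjective p).2 hp
  exact ShortComplex.ShortExact.mk'
    ((ShortComplex.mk i p w).moduleCat_exact_iff.2 hk) h1 h2

lemma sesData {A B X : ModuleCat.{u} R} {i : A ⟶ B} {p : B ⟶ X} {w : i ≫ p = 0}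
    (hS : (ShortComplex.mk i p w).ShortExact) :
    Function.Injective i ∧ Function.Surjective p ∧
      LinearMap.range i.hom = LinearMap.ker p.hom :=
  ⟨hS.moduleCat_injective_f, hS.moduleCat_surjective_g,
    hS.exact.moduleCat_range_eq_ker⟩

/-- Factor a map through a surjection whose kernel it kills. -/
lemma fac {E X V : ModuleCat.{u} R} (p : E ⟶ X) (hp : Function.Surjective p)
    (F : E ⟶ V) (hF : LinearMap.ker p.hom ≤ LinearMap.ker F.hom) :
    ∃ τ : X ⟶ V, p ≫ τ = F := by
  have key : ∀ z w' : E, p z = p w' → F z = F w' := by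
    intro z w' h
    have hz : z - w' ∈ LinearMap.ker p.hom := by
      simp [LinearMap.mem_ker, map_sub, h]
    have := hF hz
    rw [LinearMap.mem_ker, map_sub, sub_eq_zero] at this
    exact this
  refine ⟨ModuleCat.ofHom
          { toFun := fun x => F (Function.surjInv hp x)
            map_add' := ?_
            map_smul' := ?_ }, ?_⟩
  · intro x y
    rw [← map_add]
    apply key
    simp [map_add, Function.surjInv_eq hp]
  · intro r x
    rw [← map_smul]
    apply key
    simp [map_smul, Function.surjInv_eq hp]
  · apply ConcreteCategory.ext_apply
    intro e
    apply key
    simp [Function.surjInv_eq hp]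
    rfl

/-- Corestrict a map landing in the range of an injection. -/
lemma cor {K E W' : ModuleCat.{u} R} (i : K ⟶ E) (hi : Function.Injective i)
    (F : W' ⟶ E) (hF : ∀ x, F x ∈ LinearMap.range i.hom) :
    ∃ r : W' ⟶ K, r ≫ i = F := by
  set e := LinearEquiv.ofInjective i.hom hi with he
  refine ⟨ModuleCat.ofHom ((e.symm.toLinearMap).comp (LinearMap.codRestrict (LinearMap.range i.hom) F.hom hF)), ?_⟩
  apply ConcreteCategory.ext_apply
  intro x
  show i (e.symm ⟨F x, hF x⟩) = F x
  have h1 : (↑(e (e.symm ⟨F x, hF x⟩)) : E) = ((⟨F x, hF x⟩ : LinearMap.range i.hom) : E) :=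
    congrArg _ (e.apply_symm_apply _)
  rwa [he, LinearEquiv.ofInjective_apply] at h1

/-- From a section of the quotient map get a retraction of the inclusion. -/
lemma retr_of_sec {A B X : ModuleCat.{u} R} {i : A ⟶ B} {p : B ⟶ X}
    (hi : Function.Injective i) (hk : LinearMap.range i.hom = LinearMap.ker p.hom)
    (s : X ⟶ B) (hs : s ≫ p = 𝟙 X) : ∃ r : B ⟶ A, i ≫ r = 𝟙 A := by
  obtain ⟨r, hr⟩ := cor i hi (𝟙 B - p ≫ s) (by
    intro x
    rw [hk, LinearMap.mem_ker]
    have h1 : (𝟙 B - p ≫ s) x = x - s (p x) := rfl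
    have h2 : p (s (p x)) = p x := ConcreteCategory.congr_hom hs (p x)
    rw [h1, map_sub, h2, sub_self])
  refine ⟨r, ?_⟩
  apply ConcreteCategory.ext_apply
  intro a0
  apply hi
  have h1 : i (r (i a0)) = (𝟙 B - p ≫ s) (i a0) := ConcreteCategory.congr_hom hr (i a0)
  have h2 : p (i a0) = 0 := by
    have : i a0 ∈ LinearMap.ker p.hom := hk ▸ LinearMap.mem_range_self i.hom a0
    exact this
  have h3 : (𝟙 B - p ≫ s) (i a0) = i a0 - s (p (i a0)) := rfl
  rw [comp_app', h1, h3, h2, map_zero, sub_zero]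
  rfl

/-- From a retraction of the inclusion get a section of the quotient map. -/
lemma sec_of_retr {A B X : ModuleCat.{u} R} {i : A ⟶ B} {p : B ⟶ X}
    (hp : Function.Surjective p) (hk : LinearMap.range i.hom = LinearMap.ker p.hom)
    (r : B ⟶ A) (hr : i ≫ r = 𝟙 A) : ∃ s : X ⟶ B, s ≫ p = 𝟙 X := by
  obtain ⟨s, hs⟩ := fac p hp (𝟙 B - r ≫ i) (by
    intro x hx
    rw [← hk] at hx
    obtain ⟨a0, rfl⟩ := hx
    have h0 : r (i a0) = a0 := ConcreteCategory.congr_hom hr a0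
    have h1 : (𝟙 B - r ≫ i) (i a0) = i a0 - i (r (i a0)) := rfl
    rw [LinearMap.mem_ker, h1, h0, sub_self])
  refine ⟨s, ?_⟩
  apply ConcreteCategory.ext_apply
  intro x
  obtain ⟨e, rfl⟩ := hp x
  have h1 : s (p e) = (𝟙 B - r ≫ i) e := ConcreteCategory.congr_hom hs e
  have h2 : p (i (r e)) = 0 := by
    have : i (r e) ∈ LinearMap.ker p.hom := hk ▸ LinearMap.mem_range_self i.hom (r e)
    exact this
  have h3 : (𝟙 B - r ≫ i) e = e - i (r e) := rfl
  show p (s (p e)) = p e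
  rw [h1, h3, map_sub, h2, sub_zero]

end Aux


section Aux2

variable {C : ModuleCat.{u} R}

/-- Elementwise pushout of a short exact sequence `0 → L → M → N → 0` along `g : L → Z`. -/
lemma pushout_package {L M N Z : ModuleCat.{u} R} (a : L ⟶ M) (b : M ⟶ N) (g : L ⟶ Z)
    (ha : Function.Injective a) (hb : Function.Surjective b)
    (hk : LinearMap.range a.hom = LinearMap.ker b.hom) :
    ∃ (W : ModuleCat.{u} R) (jZ : Z ⟶ W) (jM : M ⟶ W) (pW : W ⟶ N),
      Function.Injective jZ ∧ Function.Surjective pW ∧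
      LinearMap.range jZ.hom = LinearMap.ker pW.hom ∧ a ≫ jM = g ≫ jZ ∧ jM ≫ pW = b := by
  classical
  set D : Submodule R (Z × M) :=
    LinearMap.range (LinearMap.prod g.hom (-a.hom)) with hD
  refine ⟨ModuleCat.of R ((Z × M) ⧸ D),
    ModuleCat.ofHom (D.mkQ.comp (LinearMap.inl R Z M)), ModuleCat.ofHom (D.mkQ.comp (LinearMap.inr R Z M)),
    ModuleCat.ofHom (D.liftQ (b.hom.comp (LinearMap.snd R Z M)) ?_), ?_, ?_, ?_, ?_, ?_⟩
  · rintro x ⟨l, rfl⟩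
    simp only [LinearMap.mem_ker, LinearMap.comp_apply, LinearMap.prod_apply,
      LinearMap.snd_apply, Pi.prod, LinearMap.neg_apply, map_neg]
    have : b (a l) = 0 := by
      have : a l ∈ LinearMap.ker b.hom := hk ▸ LinearMap.mem_range_self a.hom l
      exact this
    show b (-(a l)) = 0
    rw [map_neg, this, neg_zero]
  · -- injectivity of jZ
    intro z z' h
    have h2 : (z - z', (0 : M)) ∈ D := by
      have := (Submodule.Quotient.eq D).1 h
      simpa using this
    rw [hD] at h2
    obtain ⟨l, hl⟩ := h2
    have hl1 : g l = z - z' := congrArg Prod.fst hl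
    have hl2 : -(a l) = (0 : M) := congrArg Prod.snd hl
    have : a l = 0 := by rw [← neg_neg (a l), hl2, neg_zero]
    have : l = 0 := ha (by rw [this, map_zero])
    have : z - z' = 0 := by rw [← hl1, this, map_zero]
    exact sub_eq_zero.1 this
  · -- surjectivity of pW
    intro n
    obtain ⟨m, rfl⟩ := hb n
    exact ⟨D.mkQ (0, m), rfl⟩
  · -- range jZ = ker pW
    apply le_antisymm
    · rintro x ⟨z, rfl⟩
      simp only [LinearMap.mem_ker, LinearMap.comp_apply]
      show b (0 : M) = 0
      exact map_zero b.hom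
    · rintro x hx
      obtain ⟨⟨z, m⟩, rfl⟩ := D.mkQ_surjective x
      have hbm : b m = 0 := hx
      have : m ∈ LinearMap.range a.hom := hk ▸ hbm
      obtain ⟨l, rfl⟩ := this
      refine ⟨z + g l, ?_⟩
      show D.mkQ (z + g l, 0) = D.mkQ (z, a l)
      rw [Submodule.mkQ_apply, Submodule.mkQ_apply, Submodule.Quotient.eq]
      refine ⟨l, ?_⟩
      show (g l, -(a l)) = (z + g l, 0) - (z, a l)
      ext
      · show g l = z + g l - z
        abel
      · show -(a l) = 0 - a l
        abel
  · -- a ≫ jM = g ≫ jZ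
    apply ConcreteCategory.ext_apply
    intro l
    show D.mkQ (0, a l) = D.mkQ (g l, 0)
    rw [Submodule.mkQ_apply, Submodule.mkQ_apply, Submodule.Quotient.eq]
    refine ⟨-l, ?_⟩
    show (g (-l), -(a (-l))) = (0, a l) - (g l, 0)
    ext
    · show g (-l) = 0 - g l
      rw [map_neg]; abel
    · show -(a (-l)) = a l - 0
      rw [map_neg]; abel
  · -- jM ≫ pW = b
    apply ConcreteCategory.ext_apply
    intro m
    show b ((0 : Z), m).2 = b m
    rfl

end Aux2


section Aux3

variable {C : ModuleCat.{u} R}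

lemma comp_zero_of_range_eq_ker {A B X : ModuleCat.{u} R} (f : A ⟶ B) (g : B ⟶ X)
    (h : LinearMap.range f.hom = LinearMap.ker g.hom) : f ≫ g = 0 := by
  apply ConcreteCategory.ext_apply
  intro x
  have : f x ∈ LinearMap.ker g.hom := h ▸ LinearMap.mem_range_self f.hom x
  exact this

lemma ses_exists_preimage {A B X : ModuleCat.{u} R} {f : A ⟶ B} {g : B ⟶ X}
    (h : LinearMap.range f.hom = LinearMap.ker g.hom) :
    ∀ x, g x = 0 → ∃ a, f a = x := by
  intro x hx
  have : x ∈ LinearMap.range f.hom := h ▸ (show x ∈ LinearMap.ker g.hom from hx)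
  exact this

/-- Lifting along a surjection with kernel `K`, given `Ext¹(Y, K) = 0`. -/
lemma lift_of_ext1 {K E X Y : ModuleCat.{u} R} {i : K ⟶ E} {p : E ⟶ X}
    (hi : Function.Injective i) (hp : Function.Surjective p)
    (hk : LinearMap.range i.hom = LinearMap.ker p.hom)
    (hY : Ext1Vanish Y K) (f : Y ⟶ X) : ∃ g : Y ⟶ E, g ≫ p = f := by
  classical
  set P : Submodule R (E × Y) :=
    LinearMap.ker (p.hom.comp (LinearMap.fst R E Y) -
      f.hom.comp (LinearMap.snd R E Y)) with hP
  have hmem : ∀ v : E × Y, v ∈ P ↔ p v.1 = f v.2 := by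
    intro v
    rw [hP, LinearMap.mem_ker, LinearMap.sub_apply, sub_eq_zero]
    exact Iff.rfl
  set iP : K ⟶ ModuleCat.of R P :=
    ModuleCat.ofHom (LinearMap.codRestrict P ((LinearMap.inl R E Y).comp i.hom)
      (fun k => by
        rw [hmem]
        show p (i k) = f 0
        have : i k ∈ LinearMap.ker p.hom := hk ▸ LinearMap.mem_range_self i.hom k
        rw [show p (i k) = 0 from this, map_zero])) with hiP
  set pP : ModuleCat.of R P ⟶ Y := ModuleCat.ofHom ((LinearMap.snd R E Y).comp P.subtype) with hpP
  have w0 : iP ≫ pP = 0 := by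
    apply ConcreteCategory.ext_apply
    intro k
    rfl
  have hinj : Function.Injective iP := by
    intro k k' h
    have := congrArg Prod.fst (congrArg Subtype.val h)
    exact hi this
  have hsurj : Function.Surjective pP := by
    intro y
    obtain ⟨e, he⟩ := hp (f y)
    exact ⟨⟨(e, y), (hmem _).2 he⟩, rfl⟩
  have hker : ∀ x, pP x = 0 → ∃ k, iP k = x := by
    rintro ⟨⟨e, y⟩, hv⟩ hx
    have hy : y = 0 := hx
    have : p e = 0 := by
      have := (hmem _).1 hv
      rw [this, hy, map_zero]
    obtain ⟨k, hke⟩ := ses_exists_preimage hk e this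
    refine ⟨k, ?_⟩
    apply Subtype.ext
    show ((i k : E), (0 : Y)) = (e, y)
    rw [hke, hy]
  obtain ⟨s, hs⟩ := hY _ iP pP w0 (mkSES iP pP w0 hinj hsurj hker)
  refine ⟨s ≫ (ModuleCat.ofHom ((LinearMap.fst R E Y).comp P.subtype) : ModuleCat.of R P ⟶ E), ?_⟩
  apply ConcreteCategory.ext_apply
  intro y
  show p ((s y).val.1) = f y
  have h1 : p ((s y).val.1) = f ((s y).val.2) := (hmem _).1 (s y).property
  have h2 : (s y).val.2 = y := ConcreteCategory.congr_hom hs y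
  rw [h1, h2]

/-- Extending along an injection with cokernel `M`, given `Ext¹(M, Z) = 0`. -/
lemma extend_of_ext1 {A P M Z : ModuleCat.{u} R} {j : A ⟶ P} {q : P ⟶ M}
    (hj : Function.Injective j) (hq : Function.Surjective q)
    (hk : LinearMap.range j.hom = LinearMap.ker q.hom)
    (hM : Ext1Vanish M Z) (f : A ⟶ Z) : ∃ g : P ⟶ Z, j ≫ g = f := by
  obtain ⟨W, jZ, jP, pW, h1, h2, h3, h4, h5⟩ := pushout_package j q f hj hq hk
  obtain ⟨s, hs⟩ := hM W jZ pW (comp_zero_of_range_eq_ker _ _ h3)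
    (mkSES jZ pW _ h1 h2 (ses_exists_preimage h3))
  obtain ⟨r, hr⟩ := retr_of_sec h1 h3 s hs
  refine ⟨jP ≫ r, ?_⟩
  rw [← Category.assoc, h4, Category.assoc, hr, Category.comp_id]

lemma ext1_retract_left {K X Y : ModuleCat.{u} R} (h : Ext1Vanish Y K)
    (s : X ⟶ Y) (r : Y ⟶ X) (hsr : s ≫ r = 𝟙 X) : Ext1Vanish X K := by
  intro E i p w hS
  obtain ⟨hi, hp, hk⟩ := sesData hS
  obtain ⟨g, hg⟩ := lift_of_ext1 hi hp hk h r
  exact ⟨s ≫ g, by rw [Category.assoc, hg, hsr]⟩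

lemma ext1_retract_right {K P X : ModuleCat.{u} R} (h : Ext1Vanish X P)
    (s : K ⟶ P) (r : P ⟶ K) (hsr : s ≫ r = 𝟙 K) : Ext1Vanish X K := by
  intro E i p w hS
  obtain ⟨hi, hp, hk⟩ := sesData hS
  obtain ⟨W, jP, jE, pW, h1, h2, h3, h4, h5⟩ := pushout_package i p s hi hp hk
  obtain ⟨σ, hσ⟩ := h W jP pW (comp_zero_of_range_eq_ker _ _ h3)
    (mkSES jP pW _ h1 h2 (ses_exists_preimage h3))
  obtain ⟨ρ, hρ⟩ := retr_of_sec h1 h3 σ hσ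
  have hretr : i ≫ (jE ≫ ρ ≫ r) = 𝟙 K := by
    calc i ≫ jE ≫ ρ ≫ r = ((i ≫ jE) ≫ ρ) ≫ r := by simp only [Category.assoc]
      _ = ((s ≫ jP) ≫ ρ) ≫ r := by rw [h4]
      _ = (s ≫ (jP ≫ ρ)) ≫ r := by simp only [Category.assoc]
      _ = s ≫ r := by rw [hρ, Category.comp_id]
      _ = 𝟙 K := hsr
  exact sec_of_retr hp hk _ hretr

lemma ext1_pi {X K : ModuleCat.{u} R} (h : Ext1Vanish X K) (ι : Type u) :
    Ext1Vanish X (ModuleCat.of R (ι → K)) := by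
  intro E i p w hS
  obtain ⟨hi, hp, hk⟩ := sesData hS
  choose W jK jE pW h1 h2 h3 h4 h5 using fun k : ι =>
    pushout_package i p
      (show ModuleCat.of R (ι → K) ⟶ K from ModuleCat.ofHom (LinearMap.proj k : (ι → K) →ₗ[R] K)) hi hp hk
  choose s hs using fun k => h (W k) (jK k) (pW k)
    (comp_zero_of_range_eq_ker _ _ (h3 k))
    (mkSES (jK k) (pW k) _ (h1 k) (h2 k) (ses_exists_preimage (h3 k)))
  choose r hr using fun k => retr_of_sec (h1 k) (h3 k) (s k) (hs k)
  set rE : E ⟶ ModuleCat.of R (ι → K) :=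
    ModuleCat.ofHom (LinearMap.pi (fun k => (jE k ≫ r k : E ⟶ K).hom) : E →ₗ[R] (ι → K)) with hrE
  have hretr : i ≫ rE = 𝟙 _ := by
    apply ConcreteCategory.ext_apply
    intro v
    funext k
    show r k (jE k (i v)) = v k
    have e1 : jE k (i v) = jK k (v k) := ConcreteCategory.congr_hom (h4 k) v
    have e2 : r k (jK k (v k)) = v k := ConcreteCategory.congr_hom (hr k) (v k)
    rw [e1, e2]
  exact sec_of_retr hp hk rE hretr

end Aux3


section Aux4

variable {C : ModuleCat.{u} R}

lemma memProd_self : MemProd C C := by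
  refine ⟨PUnit.{u+1},
    ModuleCat.ofHom (LinearMap.pi (fun _ : PUnit.{u+1} => (LinearMap.id : C →ₗ[R] C)) :
      C →ₗ[R] (PUnit.{u+1} → C)),
    ModuleCat.ofHom (LinearMap.proj PUnit.unit : (PUnit.{u+1} → C) →ₗ[R] C), ?_⟩
  apply ConcreteCategory.ext_apply
  intro x
  rfl

lemma memProd_retract {X X' : ModuleCat.{u} R} (h : MemProd C X)
    (s : X' ⟶ X) (r : X ⟶ X') (hsr : s ≫ r = 𝟙 X') : MemProd C X' := by
  obtain ⟨ι, s0, r0, h0⟩ := h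
  refine ⟨ι, s ≫ s0, r0 ≫ r, ?_⟩
  calc s ≫ s0 ≫ r0 ≫ r = s ≫ (s0 ≫ r0) ≫ r := by simp only [Category.assoc]
    _ = s ≫ 𝟙 X ≫ r := by rw [h0]
    _ = 𝟙 X' := by rw [Category.id_comp, hsr]

lemma memProd_pi {X : ModuleCat.{u} R} (h : MemProd C X) (κ : Type u) :
    MemProd C (ModuleCat.of R (κ → X)) := by
  obtain ⟨μ, s0, r0, h0⟩ := h
  have hr0s0 : ∀ x : X, r0 (s0 x) = x := fun x => ConcreteCategory.congr_hom h0 x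
  refine ⟨κ × μ,
    ModuleCat.ofHom
    { toFun := fun v km => s0 (v km.1) km.2
      map_add' := fun x y => by
        funext km
        show s0 ((x + y) km.1) km.2 = s0 (x km.1) km.2 + s0 (y km.1) km.2
        rw [show (x + y) km.1 = x km.1 + y km.1 from rfl, map_add]
        rfl
      map_smul' := fun t x => by
        funext km
        show s0 ((t • x) km.1) km.2 = t • (s0 (x km.1) km.2)
        rw [show (t • x) km.1 = t • (x km.1) from rfl, map_smul]
        rfl },
    ModuleCat.ofHom
    { toFun := fun y k => r0 (fun m => y (k, m))
      map_add' := fun x y => by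
        funext k
        show r0 (fun m => (x + y) (k, m)) = r0 (fun m => x (k, m)) + r0 (fun m => y (k, m))
        rw [show (fun m => (x + y) (k, m)) =
          (fun m => x (k, m)) + (fun m => y (k, m)) from rfl, map_add]
      map_smul' := fun t x => by
        funext k
        show r0 (fun m => (t • x) (k, m)) = t • r0 (fun m => x (k, m))
        rw [show (fun m => (t • x) (k, m)) = t • (fun m => x (k, m)) from rfl, map_smul] }, ?_⟩
  apply ConcreteCategory.ext_apply
  intro v
  funext k
  exact hr0s0 (v k)

lemma ext1_memProd_left (hCot : IsCotilting C) {X : ModuleCat.{u} R}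
    (h : MemProd C X) : Ext1Vanish X C := by
  obtain ⟨ι, s, r, hsr⟩ := h
  exact ext1_retract_left (hCot.ext_prod_vanish ι) s r hsr

lemma ext1_memProd_right {X P : ModuleCat.{u} R} (hX : Ext1Vanish X C)
    (h : MemProd C P) : Ext1Vanish X P := by
  obtain ⟨ι, s, r, hsr⟩ := h
  exact ext1_retract_right (ext1_pi hX ι) s r hsr

lemma ext1_equiv_right {X K P : ModuleCat.{u} R} (h : Ext1Vanish X P)
    (e : (K : Type u) ≃ₗ[R] (P : Type u)) : Ext1Vanish X K :=
  ext1_retract_right h (show K ⟶ P from ModuleCat.ofHom e.toLinearMap)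
    (show P ⟶ K from ModuleCat.ofHom e.symm.toLinearMap)
    (ConcreteCategory.ext_apply fun x => e.symm_apply_apply x)

/-- The cotilting class is closed under submodules (uses `inj.dim C ≤ 1`). -/
lemma ext1_mono_left (hCot : IsCotilting C) {X' X : ModuleCat.{u} R} (f : X' ⟶ X)
    (hf : Function.Injective f) (hX : Ext1Vanish X C) : Ext1Vanish X' C := by
  obtain ⟨I₀, I₁, i₀, p₀, w₀, hI₀, hI₁, hSE₀⟩ := hCot.injdim_le_one
  obtain ⟨hi₀, hp₀, hk₀⟩ := sesData hSE₀
  haveI := hI₀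
  haveI := hI₁
  intro E u q w hS
  obtain ⟨hu, hq, hk⟩ := sesData hS
  haveI : Mono u := (ModuleCat.mono_iff_injective u).2 hu
  haveI : Mono f := (ModuleCat.mono_iff_injective f).2 hf
  set φ : E ⟶ I₀ := Injective.factorThru i₀ u with hφ
  have hφu : u ≫ φ = i₀ := Injective.comp_factorThru i₀ u
  obtain ⟨τ, hτ⟩ := fac q hq (φ ≫ p₀) (by
    intro x hx
    obtain ⟨c, rfl⟩ := ses_exists_preimage hk x hx
    show p₀ (φ (u c)) = 0
    rw [show φ (u c) = i₀ c from ConcreteCategory.congr_hom hφu c]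
    exact ConcreteCategory.congr_hom w₀ c)
  set σ : X ⟶ I₁ := Injective.factorThru τ f with hσ
  have hfσ : f ≫ σ = τ := Injective.comp_factorThru τ f
  obtain ⟨ρ, hρ⟩ := lift_of_ext1 hi₀ hp₀ hk₀ hX σ
  set θ : E ⟶ I₀ := φ - q ≫ f ≫ ρ with hθ
  obtain ⟨r, hr⟩ := cor i₀ hi₀ θ (by
    intro e
    rw [hk₀, LinearMap.mem_ker]
    show p₀ (φ e - ρ (f (q e))) = 0
    rw [map_sub]
    have e1 : p₀ (φ e) = τ (q e) := (ConcreteCategory.congr_hom hτ e).symm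
    have e2 : p₀ (ρ (f (q e))) = σ (f (q e)) := ConcreteCategory.congr_hom hρ (f (q e))
    have e3 : σ (f (q e)) = τ (q e) := ConcreteCategory.congr_hom hfσ (q e)
    rw [e1, e2, e3, sub_self])
  have hur : u ≫ r = 𝟙 C := by
    apply ConcreteCategory.ext_apply
    intro c
    apply hi₀
    have h1 : i₀ (r (u c)) = θ (u c) := ConcreteCategory.congr_hom hr (u c)
    have h2 : θ (u c) = φ (u c) - ρ (f (q (u c))) := rfl
    have h3 : q (u c) = 0 := by
      have : u c ∈ LinearMap.ker q.hom := hk ▸ LinearMap.mem_range_self u.hom c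
      exact this
    rw [comp_app', h1, h2, h3, map_zero, map_zero, sub_zero]
    exact ConcreteCategory.congr_hom hφu c
  exact sec_of_retr hq hk r hur

/-- Modules in the cotilting class are cogenerated by `C`. -/
lemma cogen (hCot : IsCotilting C) {X : ModuleCat.{u} R} (hX : Ext1Vanish X C) :
    ∃ (μ : Type u) (m : X ⟶ ModuleCat.of R (μ → C)), Function.Injective m := by
  classical
  obtain ⟨C₁, C₀, I, i, p, w, h1, h0, hI, hSE⟩ := hCot.exists_coseq
  obtain ⟨hi, hp, hk⟩ := sesData hSE
  obtain ⟨κ, m₀, hm₀⟩ := hI.2 X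
  have hm₀i : Function.Injective m₀ := (ModuleCat.mono_iff_injective m₀).1 hm₀
  set i' : ModuleCat.of R (κ → C₁) ⟶ ModuleCat.of R (κ → C₀) :=
    ModuleCat.ofHom ((i.hom.compLeft κ : (κ → C₁) →ₗ[R] (κ → C₀))) with hi'def
  set p' : ModuleCat.of R (κ → C₀) ⟶ ModuleCat.of R (κ → I) :=
    ModuleCat.ofHom ((p.hom.compLeft κ : (κ → C₀) →ₗ[R] (κ → I))) with hp'def
  have hi' : Function.Injective i' := by
    intro v v' h
    funext k
    exact hi (congrFun h k)
  have hp' : Function.Surjective p' := by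
    intro y
    choose x hx using fun k => hp (y k)
    exact ⟨x, funext hx⟩
  have hk' : LinearMap.range i'.hom = LinearMap.ker p'.hom := by
    apply le_antisymm
    · rintro _ ⟨v, rfl⟩
      show p' (i' v) = 0
      funext k
      show p (i (v k)) = 0
      have : i (v k) ∈ LinearMap.ker p.hom := hk ▸ LinearMap.mem_range_self i.hom (v k)
      exact this
    · intro v hv
      have hv' : ∀ k, p (v k) = 0 := fun k => congrFun (LinearMap.mem_ker.1 hv) k
      choose uu hu using fun k => ses_exists_preimage hk (v k) (hv' k)
      exact ⟨uu, funext hu⟩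
  obtain ⟨g, hg⟩ := lift_of_ext1 hi' hp' hk'
    (ext1_memProd_right hX (memProd_pi h1 κ)) m₀
  have hgi : Function.Injective g := by
    intro x y h
    apply hm₀i
    have hx : m₀ x = p' (g x) := (ConcreteCategory.congr_hom hg x).symm
    have hy : m₀ y = p' (g y) := (ConcreteCategory.congr_hom hg y).symm
    rw [hx, hy, h]
  obtain ⟨μ₀, s₀, r₀, hs₀⟩ := h0
  have hs₀i : Function.Injective s₀ := by
    intro x y h
    have hx : r₀ (s₀ x) = x := ConcreteCategory.congr_hom hs₀ x
    have hy : r₀ (s₀ y) = y := ConcreteCategory.congr_hom hs₀ y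
    rw [← hx, ← hy, h]
  refine ⟨κ × μ₀,
    ModuleCat.ofHom
    { toFun := fun x km => s₀ (g x km.1) km.2
      map_add' := fun x y => by
        funext km
        show s₀ ((g (x + y)) km.1) km.2 = s₀ ((g x) km.1) km.2 + s₀ ((g y) km.1) km.2
        rw [map_add (ConcreteCategory.hom g)]
        rw [show (g x + g y) km.1 = (g x) km.1 + (g y) km.1 from rfl, map_add]
        rfl
      map_smul' := fun t x => by
        funext km
        show s₀ ((g (t • x)) km.1) km.2 = t • s₀ ((g x) km.1) km.2
        rw [map_smul (ConcreteCategory.hom g)]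
        rw [show (t • g x) km.1 = t • ((g x) km.1) from rfl, map_smul]
        rfl }, ?_⟩
  intro x y h
  apply hgi
  funext k
  apply hs₀i
  funext m0
  exact congrFun h (k, m0)

lemma cotiltClass_self (hCot : IsCotilting C) : Ext1Vanish C C :=
  ext1_memProd_left hCot memProd_self

lemma hom_zero_of_tors (hCot : IsCotilting C) {X Z : ModuleCat.{u} R}
    (hX : X ∈ cotiltTors C) (hZ : Ext1Vanish Z C) (f : X ⟶ Z) : f = 0 := by
  obtain ⟨μ, m, hm⟩ := cogen hCot hZ
  apply ConcreteCategory.ext_apply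
  intro x
  show f x = 0
  apply hm
  rw [map_zero]
  funext k
  exact ConcreteCategory.congr_hom
    (hX (f ≫ m ≫ (show ModuleCat.of R (μ → C) ⟶ C from ModuleCat.ofHom (LinearMap.proj k)))) x

lemma subsingleton_of_tors_cotilt (hCot : IsCotilting C) {X : ModuleCat.{u} R}
    (hQ : X ∈ cotiltTors C) (hX : Ext1Vanish X C) : Subsingleton X := by
  obtain ⟨C₁, C₀, I, i, p, w, h1, h0, hI, hSE⟩ := hCot.exists_coseq
  obtain ⟨hi, hp, hk⟩ := sesData hSE
  obtain ⟨κ, m₀, hm₀⟩ := hI.2 X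
  have hm := (ModuleCat.mono_iff_injective m₀).1 hm₀
  refine subsingleton_of_forall_eq 0 fun x => ?_
  apply hm
  rw [map_zero]
  funext k
  set fk : X ⟶ I := m₀ ≫ (show ModuleCat.of R (κ → I) ⟶ I from ModuleCat.ofHom (LinearMap.proj k))
  obtain ⟨gk, hgk⟩ := lift_of_ext1 hi hp hk (ext1_memProd_right hX h1) fk
  have hg0 : gk = 0 := hom_zero_of_tors hCot hQ (ext1_memProd_left hCot h0) gk
  have : fk x = 0 := by
    rw [← ConcreteCategory.congr_hom hgk x]
    show p (gk x) = 0
    rw [hg0]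
    show p 0 = 0
    exact map_zero p.hom
  exact this

lemma isIsoOfBijective {X Y : ModuleCat.{u} R} (f : X ⟶ Y)
    (hf : Function.Bijective f) : IsIso f := by
  set e := LinearEquiv.ofBijective f.hom hf
  exact ⟨(ModuleCat.ofHom e.symm.toLinearMap : Y ⟶ X),
    ConcreteCategory.ext_apply fun x => e.symm_apply_apply x,
    ConcreteCategory.ext_apply fun y => e.apply_symm_apply y⟩

end Aux4


section Aux5

variable {C : ModuleCat.{u} R}

lemma submodule_eq_bot_of_subsingleton {M0 : Type u} [AddCommGroup M0] [Module R M0]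
    {S : Submodule R M0} (h : Subsingleton S) : S = ⊥ := by
  rw [eq_bot_iff]
  intro x hx
  have h0 : (⟨x, hx⟩ : S) = 0 := Subsingleton.elim _ _
  simpa using congrArg Subtype.val h0

/-- The quotient by the torsion radical lies in the cotilting class. -/
lemma torsRad_quot (hCot : IsCotilting C) (W : ModuleCat.{u} R) :
    Ext1Vanish (ModuleCat.of R (W ⧸ (⨅ f : W ⟶ C, LinearMap.ker f.hom))) C := by
  set K₀ : Submodule R W := ⨅ f : W ⟶ C, LinearMap.ker f.hom with hK₀
  set c : W ⟶ ModuleCat.of R ((W ⟶ C) → C) :=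
    ModuleCat.ofHom ((LinearMap.pi (fun f : W ⟶ C => f.hom) : W →ₗ[R] ((W ⟶ C) → C))) with hc
  have hker : LinearMap.ker c.hom = K₀ := by
    ext x
    rw [hK₀, LinearMap.mem_ker, Submodule.mem_iInf]
    constructor
    · intro h f
      exact congrFun h f
    · intro h
      funext f
      exact h f
  set cb : ModuleCat.of R (W ⧸ K₀) ⟶ ModuleCat.of R ((W ⟶ C) → C) :=
    ModuleCat.ofHom (K₀.liftQ c.hom (le_of_eq hker.symm)) with hcb
  have hinj : Function.Injective cb := by
    rw [← LinearMap.ker_eq_bot]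
    exact Submodule.ker_liftQ_eq_bot K₀ _ _ (le_of_eq hker)
  exact ext1_mono_left hCot cb hinj (hCot.ext_prod_vanish _)

/-- The torsion radical is torsion. -/
lemma torsRad_tors (hCot : IsCotilting C) (W : ModuleCat.{u} R) :
    ModuleCat.of R ↥(⨅ f : W ⟶ C, LinearMap.ker f.hom) ∈ cotiltTors C := by
  set K₀ : Submodule R W := ⨅ f : W ⟶ C, LinearMap.ker f.hom with hK₀
  intro f
  obtain ⟨F, hF⟩ := extend_of_ext1 (j := (ModuleCat.ofHom K₀.subtype : ModuleCat.of R K₀ ⟶ W))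
    (q := (ModuleCat.ofHom K₀.mkQ : W ⟶ ModuleCat.of R (W ⧸ K₀))) K₀.injective_subtype
    K₀.mkQ_surjective
    (by rw [ModuleCat.hom_ofHom, ModuleCat.hom_ofHom, Submodule.range_subtype, Submodule.ker_mkQ]) (torsRad_quot hCot W) f
  apply ConcreteCategory.ext_apply
  intro x
  have h1 : F x.1 = f x := ConcreteCategory.congr_hom hF x
  have h2 : F x.1 = 0 := by
    have hx : x.1 ∈ LinearMap.ker F.hom := by
      have hxK : x.1 ∈ (⨅ f : W ⟶ C, LinearMap.ker f.hom) := x.2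
      exact (Submodule.mem_iInf _).1 hxK F
    exact hx
  show f x = 0
  rw [← h1, h2]

/-- Key step: the left almost split factorization property, from the cover side. -/
lemma las_exists (hCot : IsCotilting C) {L M N : ModuleCat.{u} R} (a : L ⟶ M)
    (b : M ⟶ N) (ha : Function.Injective a) (hb : Function.Surjective b)
    (hk : LinearMap.range a.hom = LinearMap.ker b.hom)
    (hATF : AlmostTorsionFree (cotiltTors C) (cotiltClass C) N)
    (hMC : Ext1Vanish M C)
    (hKperp : ModuleCat.of R (LinearMap.ker b.hom) ∈ perp1 (cotiltClass C))
    (hmin : ∀ h : M ⟶ M, h ≫ b = b → IsIso h)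
    {Z : ModuleCat.{u} R} (hZ : Ext1Vanish Z C) (g : L ⟶ Z) (hg : ¬ IsSplitMono g) :
    ∃ h : M ⟶ Z, a ≫ h = g := by
  classical
  obtain ⟨W, jZ, jM, pW, h1, h2, h3, h4, h5⟩ := pushout_package a b g ha hb hk
  set K₀ : Submodule R W := ⨅ f : W ⟶ C, LinearMap.ker f.hom with hK₀
  -- any submodule of W contained in range jZ is in the cotilting class
  have hsub : ∀ S : Submodule R W, S ≤ LinearMap.range jZ.hom →
      Ext1Vanish (ModuleCat.of R S) C := by
    intro S hle
    set FS : ModuleCat.of R ↥S ⟶ W := ModuleCat.ofHom (S.subtype) with hFS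
    obtain ⟨ψ, hψ⟩ := cor jZ h1 FS (fun x => hle x.2)
    have hψi : Function.Injective ψ := by
      intro x y hxy
      apply Subtype.ext
      have ex : jZ (ψ x) = x.1 := ConcreteCategory.congr_hom hψ x
      have ey : jZ (ψ y) = y.1 := ConcreteCategory.congr_hom hψ y
      rw [← ex, ← ey, hxy]
    exact ext1_mono_left hCot ψ hψi hZ
  by_cases hcase : Submodule.map pW.hom K₀ = ⊤
  · -- the torsion radical maps onto N; use (ATF2)
    set p' : ModuleCat.of R K₀ ⟶ N := ModuleCat.ofHom (pW.hom.domRestrict K₀) with hp'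
    have hp's : Function.Surjective p' := by
      intro n
      have : n ∈ Submodule.map pW.hom K₀ := by rw [hcase]; trivial
      obtain ⟨x, hx, rfl⟩ := this
      exact ⟨⟨x, hx⟩, rfl⟩
    set A₀ : Submodule R (↥K₀) := LinearMap.ker p'.hom with hA₀
    set i' : ModuleCat.of R A₀ ⟶ ModuleCat.of R K₀ := ModuleCat.ofHom (A₀.subtype) with hi'
    have w' : i' ≫ p' = 0 := by
      apply ConcreteCategory.ext_apply
      rintro ⟨x, hx⟩
      exact hx
    have hSE' : (ShortComplex.mk i' p' w').ShortExact :=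
      mkSES i' p' w' A₀.injective_subtype hp's (by
        intro x hx
        exact ⟨⟨x, hx⟩, rfl⟩)
    have hA₀tors : ModuleCat.of R A₀ ∈ cotiltTors C :=
      hATF.2.2 (ModuleCat.of R A₀) (ModuleCat.of R K₀) i' p' w' hSE'
        (torsRad_tors hCot W)
    have hA₀class : Ext1Vanish (ModuleCat.of R A₀) C := by
      -- A₀ embeds into Z
      set F : ModuleCat.of R A₀ ⟶ W := ModuleCat.ofHom ((K₀.subtype).comp A₀.subtype) with hFdef
      obtain ⟨ψ₀, hψ₀⟩ := cor jZ h1 F (by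
        rintro ⟨⟨x, hxK⟩, hxA⟩
        rw [h3, LinearMap.mem_ker]
        exact hxA)
      have hψ₀i : Function.Injective ψ₀ := by
        intro x y hxy
        apply Subtype.ext
        apply Subtype.ext
        have ex : jZ (ψ₀ x) = x.1.1 := ConcreteCategory.congr_hom hψ₀ x
        have ey : jZ (ψ₀ y) = y.1.1 := ConcreteCategory.congr_hom hψ₀ y
        rw [← ex, ← ey, hxy]
      exact ext1_mono_left hCot ψ₀ hψ₀i hZ
    have : Subsingleton (ModuleCat.of R A₀) :=
      subsingleton_of_tors_cotilt hCot hA₀tors hA₀class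
    have hA₀bot : A₀ = ⊥ := submodule_eq_bot_of_subsingleton this
    have hp'i : Function.Injective p' := by
      rw [← LinearMap.ker_eq_bot]
      exact hA₀bot
    set e' := LinearEquiv.ofBijective p'.hom ⟨hp'i, hp's⟩ with he'
    set s : N ⟶ W := ModuleCat.ofHom ((K₀.subtype).comp e'.symm.toLinearMap) with hs
    have hsp : s ≫ pW = 𝟙 N := by
      apply ConcreteCategory.ext_apply
      intro n
      show pW (K₀.subtype (e'.symm n)) = n
      have : p' (e'.symm n) = n := e'.apply_symm_apply n
      exact this
    obtain ⟨rW, hrW⟩ := retr_of_sec h1 h3 s hsp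
    refine ⟨jM ≫ rW, ?_⟩
    calc a ≫ jM ≫ rW = (a ≫ jM) ≫ rW := by simp only [Category.assoc]
      _ = (g ≫ jZ) ≫ rW := by rw [h4]
      _ = g ≫ (jZ ≫ rW) := by simp only [Category.assoc]
      _ = g := by rw [hrW, Category.comp_id]
  · -- the image of the torsion radical is a proper submodule of N
    exfalso
    set pm : Submodule R N := Submodule.map pW.hom K₀ with hpm
    have hpmtors : ModuleCat.of R pm ∈ cotiltTors C := by
      intro f
      set q₀ : ModuleCat.of R K₀ ⟶ ModuleCat.of R pm :=
        ModuleCat.ofHom (LinearMap.codRestrict pm (pW.hom.domRestrict K₀)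
          (fun x => Submodule.mem_map_of_mem x.2)) with hq₀
      have hq₀s : Function.Surjective q₀ := by
        rintro ⟨n, hn⟩
        obtain ⟨x, hx, rfl⟩ := hn
        exact ⟨⟨x, hx⟩, rfl⟩
      have hzero : q₀ ≫ f = 0 := torsRad_tors hCot W (q₀ ≫ f)
      apply ConcreteCategory.ext_apply
      intro y
      obtain ⟨x, rfl⟩ := hq₀s y
      exact ConcreteCategory.congr_hom hzero x
    have hpmclass : ModuleCat.of R pm ∈ cotiltClass C := hATF.2.1 pm hcase
    have : Subsingleton (ModuleCat.of R pm) :=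
      subsingleton_of_tors_cotilt hCot hpmtors hpmclass
    have hpmbot : pm = ⊥ := submodule_eq_bot_of_subsingleton this
    have hKle : K₀ ≤ LinearMap.range jZ.hom := by
      intro x hx
      rw [h3, LinearMap.mem_ker]
      have : pW x ∈ pm := Submodule.mem_map_of_mem hx
      rw [hpmbot] at this
      simpa using this
    have hK₀class : Ext1Vanish (ModuleCat.of R K₀) C := hsub K₀ hKle
    have : Subsingleton (ModuleCat.of R K₀) :=
      subsingleton_of_tors_cotilt hCot (torsRad_tors hCot W) hK₀class
    have hK₀bot : K₀ = ⊥ := submodule_eq_bot_of_subsingleton this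
    -- hence W is torsion-free, i.e. lies in the cotilting class
    have hWC : Ext1Vanish W C := by
      set c : W ⟶ ModuleCat.of R ((W ⟶ C) → C) :=
        ModuleCat.ofHom ((LinearMap.pi (fun f : W ⟶ C => f.hom) :
          W →ₗ[R] ((W ⟶ C) → C))) with hc
      have hker : LinearMap.ker c.hom = K₀ := by
        ext x
        rw [hK₀, LinearMap.mem_ker, Submodule.mem_iInf]
        constructor
        · intro h f
          exact congrFun h f
        · intro h
          funext f
          exact h f
      have hinj : Function.Injective c := by
        rw [← LinearMap.ker_eq_bot, hker]
        exact hK₀bot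
      exact ext1_mono_left hCot c hinj (hCot.ext_prod_vanish _)
    -- lift against the cover and contradict that `g` is not split mono
    obtain ⟨φ, hφ⟩ := lift_of_ext1 (i := (ModuleCat.ofHom (LinearMap.ker b.hom).subtype :
        ModuleCat.of R (LinearMap.ker b.hom) ⟶ M)) (p := b)
      (LinearMap.ker b.hom).injective_subtype hb (Submodule.range_subtype _)
      (hKperp W hWC) pW
    set α : M ⟶ M := jM ≫ φ with hα
    have hαb : α ≫ b = b := by
      calc (jM ≫ φ) ≫ b = jM ≫ (φ ≫ b) := by simp only [Category.assoc]
        _ = jM ≫ pW := by rw [hφ]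
        _ = b := h5
    haveI hiso : IsIso α := hmin α hαb
    set ψ : W ⟶ M := φ ≫ inv α with hψ
    have hjMψ : jM ≫ ψ = 𝟙 M := by
      rw [hψ, ← Category.assoc, ← hα, IsIso.hom_inv_id]
    have hψb : ψ ≫ b = pW := by
      have hinvb : inv α ≫ b = b := by
        rw [IsIso.inv_comp_eq]
        exact hαb.symm
      rw [hψ, Category.assoc, hinvb, hφ]
    obtain ⟨γ, hγ⟩ := cor a ha (jZ ≫ ψ) (by
      intro z
      rw [hk, LinearMap.mem_ker]
      show b (ψ (jZ z)) = 0
      have e1 : b (ψ (jZ z)) = pW (jZ z) := ConcreteCategory.congr_hom hψb (jZ z)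
      have e2 : pW (jZ z) = 0 := by
        have : jZ z ∈ LinearMap.ker pW.hom := h3 ▸ LinearMap.mem_range_self jZ.hom z
        exact this
      rw [e1, e2])
    apply hg
    refine ⟨⟨⟨γ, ?_⟩⟩⟩
    apply ConcreteCategory.ext_apply
    intro l
    apply ha
    have e1 : a (γ (g l)) = ψ (jZ (g l)) := ConcreteCategory.congr_hom hγ (g l)
    have e2 : jZ (g l) = jM (a l) := (ConcreteCategory.congr_hom h4 l).symm
    have e3 : ψ (jM (a l)) = a l := ConcreteCategory.congr_hom hjMψ (a l)
    show a (γ (g l)) = a l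
    rw [e1, e2, e3]

end Aux5


section Aux6

variable {C : ModuleCat.{u} R}

lemma nontrivial_N_of_epi {M N : ModuleCat.{u} R} {b : M ⟶ N}
    (hb : Function.Surjective b) (hb0 : b = 0) (hN : Nontrivial N) : False := by
  obtain ⟨x, y, hxy⟩ := hN
  obtain ⟨mx, hmx⟩ := hb x
  obtain ⟨my, hmy⟩ := hb y
  apply hxy
  rw [← hmx, ← hmy, hb0]
  rfl

lemma kappa_split_mono {L M N : ModuleCat.{u} R} {a : L ⟶ M} {b : M ⟶ N}
    (hk : LinearMap.range a.hom = LinearMap.ker b.hom)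
    (hN : Nontrivial N) (hb : Function.Surjective b)
    (hMC : M ∈ cotiltClass C) (hLC : L ∈ cotiltClass C)
    (hlas : StrongLeftAlmostSplitIn (· ∈ cotiltClass C) a)
    (h : M ⟶ M) (hhb : h ≫ b = b) (κ : L ⟶ L) (hκ : κ ≫ a = a ≫ h) :
    ∃ ρ : L ⟶ L, κ ≫ ρ = 𝟙 L := by
  by_cases hsm : IsSplitMono κ
  · exact ⟨retraction κ, IsSplitMono.id κ⟩
  obtain ⟨θ, hθ, _⟩ := hlas.2 hLC κ hsm
  have hsm2 : ¬ IsSplitMono (κ ≫ a) := by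
    intro h2
    apply hsm
    refine ⟨⟨⟨a ≫ retraction (κ ≫ a), ?_⟩⟩⟩
    rw [← Category.assoc, IsSplitMono.id]
  obtain ⟨χ, hχ, hχu⟩ := hlas.2 hMC (κ ≫ a) hsm2
  have e1 : h = χ := hχu h hκ.symm
  have e2 : θ ≫ a = χ := hχu (θ ≫ a) (by
    show a ≫ θ ≫ a = κ ≫ a
    rw [← Category.assoc, hθ])
  have hb0 : b = 0 := by
    rw [← hhb, e1, ← e2, Category.assoc, comp_zero_of_range_eq_ker a b hk,
      Limits.comp_zero]
  exact (nontrivial_N_of_epi hb hb0 hN).elim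

lemma right_minimal {L M N : ModuleCat.{u} R} {a : L ⟶ M} {b : M ⟶ N}
    (ha : Function.Injective a) (hb : Function.Surjective b)
    (hk : LinearMap.range a.hom = LinearMap.ker b.hom)
    (hN : Nontrivial N) (hMC : M ∈ cotiltClass C) (hLC : L ∈ cotiltClass C)
    (hlas : StrongLeftAlmostSplitIn (· ∈ cotiltClass C) a)
    (h : M ⟶ M) (hhb : h ≫ b = b) : IsIso h := by
  obtain ⟨κ, hκ⟩ := cor a ha (a ≫ h) (by
    intro l
    rw [hk, LinearMap.mem_ker]
    show b (h (a l)) = 0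
    have e1 : b (h (a l)) = b (a l) := ConcreteCategory.congr_hom hhb (a l)
    have e2 : b (a l) = 0 := by
      have : a l ∈ LinearMap.ker b.hom := hk ▸ LinearMap.mem_range_self a.hom l
      exact this
    rw [e1, e2])
  obtain ⟨ρ, hρ⟩ := kappa_split_mono hk hN hb hMC hLC hlas h hhb κ hκ
  have hρeq : ∀ l, ρ (κ l) = l := fun l => ConcreteCategory.congr_hom hρ l
  have hρi : Function.Injective ρ := by
    by_cases hsm : IsSplitMono (ρ ≫ a)
    · intro x y hxy
      have hx : retraction (ρ ≫ a) (a (ρ x)) = x :=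
        ConcreteCategory.congr_hom (IsSplitMono.id (ρ ≫ a)) x
      have hy : retraction (ρ ≫ a) (a (ρ y)) = y :=
        ConcreteCategory.congr_hom (IsSplitMono.id (ρ ≫ a)) y
      rw [← hx, ← hy, hxy]
    · obtain ⟨hh, hhh, _⟩ := hlas.2 hMC (ρ ≫ a) hsm
      have hLM : ∀ h' : M ⟶ M, a ≫ h' = a → h' = 𝟙 M := by
        intro h' hh'
        obtain ⟨χ, hχ, hχu⟩ := hlas.2 hMC a hlas.1
        rw [hχu h' hh', ← hχu (𝟙 M) (Category.comp_id a)]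
      have hcomp : a ≫ (h ≫ hh) = a := by
        calc a ≫ h ≫ hh = (a ≫ h) ≫ hh := by simp only [Category.assoc]
          _ = (κ ≫ a) ≫ hh := by rw [hκ]
          _ = κ ≫ (a ≫ hh) := by simp only [Category.assoc]
          _ = κ ≫ ρ ≫ a := by rw [hhh]
          _ = (κ ≫ ρ) ≫ a := by simp only [Category.assoc]
          _ = a := by rw [hρ, Category.id_comp]
      have hid : h ≫ hh = 𝟙 M := hLM _ hcomp
      have hhb2 : hh ≫ b = b := by
        obtain ⟨τ, hτ⟩ := fac b hb (hh ≫ b) (by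
          intro x hx
          obtain ⟨l, rfl⟩ := ses_exists_preimage hk x hx
          rw [LinearMap.mem_ker]
          show b (hh (a l)) = 0
          have e1 : hh (a l) = a (ρ l) := ConcreteCategory.congr_hom hhh l
          rw [e1]
          have : a (ρ l) ∈ LinearMap.ker b.hom := hk ▸ LinearMap.mem_range_self a.hom (ρ l)
          exact this)
        calc hh ≫ b = b ≫ τ := hτ.symm
          _ = (h ≫ b) ≫ τ := by rw [hhb]
          _ = h ≫ (b ≫ τ) := by simp only [Category.assoc]
          _ = h ≫ (hh ≫ b) := by rw [hτ]
          _ = (h ≫ hh) ≫ b := by simp only [Category.assoc]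
          _ = b := by rw [hid, Category.id_comp]
      obtain ⟨ρ₂, hρ₂⟩ := kappa_split_mono hk hN hb hMC hLC hlas hh hhb2 ρ hhh.symm
      intro x y hxy
      have hx : ρ₂ (ρ x) = x := ConcreteCategory.congr_hom hρ₂ x
      have hy : ρ₂ (ρ y) = y := ConcreteCategory.congr_hom hρ₂ y
      rw [← hx, ← hy, hxy]
  have hκbij : Function.Bijective κ := by
    constructor
    · intro x y hxy
      rw [← hρeq x, ← hρeq y, hxy]
    · intro l
      refine ⟨ρ l, ?_⟩
      apply hρi
      rw [hρeq (ρ l)]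
  -- five lemma
  have hhab : ∀ l, h (a l) = a (κ l) := by
    intro l
    exact (ConcreteCategory.congr_hom hκ l).symm
  apply isIsoOfBijective
  constructor
  · intro x y hxy
    have hbxy : b x = b y := by
      have ex : b (h x) = b x := ConcreteCategory.congr_hom hhb x
      have ey : b (h y) = b y := ConcreteCategory.congr_hom hhb y
      rw [← ex, ← ey, hxy]
    have : x - y ∈ LinearMap.ker b.hom := by
      rw [LinearMap.mem_ker, map_sub, hbxy, sub_self]
    rw [← hk] at this
    obtain ⟨l, hl⟩ := this
    have h0 : a (κ l) = 0 := by
      rw [← hhab l, hl, map_sub, hxy, sub_self]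
    have : κ l = 0 := ha (by rw [h0, map_zero])
    have : l = 0 := hκbij.1 (by rw [this, map_zero])
    have : x - y = 0 := by rw [← hl, this, map_zero]
    exact sub_eq_zero.1 this
  · intro m
    obtain ⟨m₁, hm₁⟩ := hb (b m)
    have : m - h m₁ ∈ LinearMap.ker b.hom := by
      rw [LinearMap.mem_ker, map_sub]
      have : b (h m₁) = b m₁ := ConcreteCategory.congr_hom hhb m₁
      rw [this, hm₁, sub_self]
    rw [← hk] at this
    obtain ⟨l, hl⟩ := this
    obtain ⟨l', hl'⟩ := hκbij.2 l
    refine ⟨m₁ + a l', ?_⟩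
    rw [map_add, hhab l', hl', hl]
    abel

end Aux6

theorem cover_of_almost_torsionFree_iff_strong_las (C : ModuleCat.{u} R)
    (hC : IsCotilting C) {L M N : ModuleCat.{u} R} (a : L ⟶ M) (b : M ⟶ N)
    (w : a ≫ b = 0) (hS : (ShortComplex.mk a b w).ShortExact) :
    (N ∈ cotiltTors C ∧ AlmostTorsionFree (cotiltTors C) (cotiltClass C) N ∧
        IsSpecialCover (cotiltClass C) b) ↔
      (MemProd C L ∧ M ∈ cotiltClass C ∧
        StrongLeftAlmostSplitIn (· ∈ cotiltClass C) a) := by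
  classical
  obtain ⟨ha, hb, hk⟩ := sesData hS
  have hkerEquiv : (L : Type u) ≃ₗ[R] ↥(LinearMap.ker b.hom) :=
    (LinearEquiv.ofInjective a.hom ha).trans (LinearEquiv.ofEq _ _ hk)
  constructor
  · rintro ⟨hNQ, hATF, hMC, hbepi, hKperp, hmin⟩
    have hLC : Ext1Vanish L C := ext1_mono_left hC a ha hMC
    -- `a` is not a split monomorphism
    have hnsa : ¬ IsSplitMono a := by
      intro hsm
      obtain ⟨s, hs⟩ := sec_of_retr hb hk (retraction a) (IsSplitMono.id a)
      have hNC : Ext1Vanish N C := ext1_retract_left hMC s b hs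
      have hsub := subsingleton_of_tors_cotilt hC hNQ hNC
      obtain ⟨x, y, hxy⟩ := hATF.1
      exact hxy (Subsingleton.elim x y)
    -- transfer `perp1` facts from `ker b` to `L`
    have hextYL : ∀ Y : ModuleCat.{u} R, Ext1Vanish Y C → Ext1Vanish Y L := by
      intro Y hY
      exact ext1_retract_right (hKperp Y hY)
        (show L ⟶ ModuleCat.of R (LinearMap.ker b.hom) from ModuleCat.ofHom hkerEquiv.toLinearMap)
        (show ModuleCat.of R (LinearMap.ker b.hom) ⟶ L from ModuleCat.ofHom hkerEquiv.symm.toLinearMap)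
        (ConcreteCategory.ext_apply fun x => hkerEquiv.symm_apply_apply x)
    -- `L ∈ Prod C` via the canonical map into a product of copies of `C`
    have hMemL : MemProd C L := by
      set H := (L ⟶ C) with hH
      set uL : L ⟶ ModuleCat.of R (H → C) :=
        ModuleCat.ofHom ((LinearMap.pi (fun f : L ⟶ C => f.hom) : L →ₗ[R] (H → C))) with huL
      have huLi : Function.Injective uL := by
        intro x y hxy
        obtain ⟨μ, m, hm⟩ := cogen hC hLC
        apply hm
        funext k
        exact congrFun hxy (m ≫ (show ModuleCat.of R (μ → C) ⟶ C from
          ModuleCat.ofHom (LinearMap.proj k : (μ → C) →ₗ[R] C)))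
      set Q : ModuleCat.{u} R :=
        ModuleCat.of R ((H → C) ⧸ LinearMap.range uL.hom) with hQ
      set π : ModuleCat.of R (H → C) ⟶ Q :=
        ModuleCat.ofHom ((LinearMap.range uL.hom).mkQ) with hπ
      have hkπ : LinearMap.range uL.hom = LinearMap.ker π.hom := by
        exact (Submodule.ker_mkQ _).symm
      have hQC : Ext1Vanish Q C := by
        intro E i' q' w' hSE'
        obtain ⟨hi', hq', hk'⟩ := sesData hSE'
        obtain ⟨φ, hφ⟩ := lift_of_ext1 hi' hq' hk' (hC.ext_prod_vanish H) π
        obtain ⟨χ, hχ⟩ := cor i' hi' (uL ≫ φ) (by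
          intro l
          rw [hk', LinearMap.mem_ker]
          show q' (φ (uL l)) = 0
          have e1 : q' (φ (uL l)) = π (uL l) := ConcreteCategory.congr_hom hφ (uL l)
          have e2 : π (uL l) = 0 := by
            have : uL l ∈ LinearMap.ker π.hom := hkπ ▸ LinearMap.mem_range_self uL.hom l
            exact this
          rw [e1, e2])
        set τ : ModuleCat.of R (H → C) ⟶ C := ModuleCat.ofHom ((LinearMap.proj χ : (H → C) →ₗ[R] C))
          with hτdef
        obtain ⟨σ, hσ⟩ := fac π ((LinearMap.range uL.hom).mkQ_surjective)
          (φ - τ ≫ i') (by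
            intro x hx
            rw [← hkπ] at hx
            obtain ⟨l, rfl⟩ := hx
            rw [LinearMap.mem_ker]
            show φ (uL l) - i' (τ (uL l)) = 0
            have e1 : τ (uL l) = χ l := rfl
            have e2 : i' (χ l) = φ (uL l) := ConcreteCategory.congr_hom hχ l
            rw [e1, e2, sub_self])
        refine ⟨σ, ?_⟩
        apply ConcreteCategory.ext_apply
        intro x
        obtain ⟨v, rfl⟩ := (LinearMap.range uL.hom).mkQ_surjective x
        have e1 : σ (π v) = (φ - τ ≫ i') v := ConcreteCategory.congr_hom hσ v
        show q' (σ (π v)) = π v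
        rw [e1]
        show q' (φ v - i' (τ v)) = π v
        rw [map_sub]
        have e2 : q' (φ v) = π v := ConcreteCategory.congr_hom hφ v
        have e3 : q' (i' (τ v)) = 0 := ConcreteCategory.congr_hom w' (τ v)
        rw [e2, e3, sub_zero]
      obtain ⟨s, hs⟩ := hextYL Q hQC _ uL π (comp_zero_of_range_eq_ker _ _ hkπ)
        (mkSES _ _ _ huLi ((LinearMap.range uL.hom).mkQ_surjective)
          (ses_exists_preimage hkπ))
      obtain ⟨r, hr⟩ := retr_of_sec huLi hkπ s hs
      exact ⟨H, uL, r, hr⟩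
    refine ⟨hMemL, hMC, hnsa, ?_⟩
    intro Z hZ g hg
    obtain ⟨h, hh⟩ := las_exists hC a b ha hb hk hATF hMC hKperp hmin hZ g hg
    refine ⟨h, hh, ?_⟩
    intro y hy
    have hdiff : a ≫ (y - h) = 0 := by
      rw [Preadditive.comp_sub, hy, hh, sub_self]
    obtain ⟨τ, hτ⟩ := fac b hb (y - h) (by
      intro x hx
      rw [← hk] at hx
      obtain ⟨l, rfl⟩ := hx
      rw [LinearMap.mem_ker]
      exact ConcreteCategory.congr_hom hdiff l)
    have hτ0 : τ = 0 := hom_zero_of_tors hC hNQ hZ τ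
    have hy0 : y - h = 0 := by rw [← hτ, hτ0, Limits.comp_zero]
    exact sub_eq_zero.1 hy0
  · rintro ⟨hLP, hMC, hlas⟩
    have hLC : Ext1Vanish L C := ext1_memProd_left hC hLP
    have hCC : Ext1Vanish C C := cotiltClass_self hC
    -- N is nontrivial
    have hN : Nontrivial N := by
      by_contra hns
      rw [not_nontrivial_iff_subsingleton] at hns
      apply hlas.1
      have hasurj : Function.Surjective a := by
        intro m
        have hm : m ∈ LinearMap.ker b.hom := by
          rw [LinearMap.mem_ker]
          exact Subsingleton.elim _ _
        rw [← hk] at hm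
        exact hm
      haveI := isIsoOfBijective a ⟨ha, hasurj⟩
      exact ⟨⟨⟨inv a, IsIso.hom_inv_id a⟩⟩⟩
    -- L is nontrivial, so the zero map L ⟶ C is not a split mono
    have hLnt : ¬ Subsingleton L := by
      intro hsub
      apply hlas.1
      exact ⟨⟨⟨0, by apply ConcreteCategory.ext_apply; intro l; exact Subsingleton.elim _ _⟩⟩⟩
    have h0ns : ¬ IsSplitMono (0 : L ⟶ C) := by
      intro hsm
      apply hLnt
      constructor
      intro x y
      have hx : retraction (0 : L ⟶ C) ((0 : L ⟶ C) x) = x :=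
        ConcreteCategory.congr_hom (IsSplitMono.id (0 : L ⟶ C)) x
      have hy : retraction (0 : L ⟶ C) ((0 : L ⟶ C) y) = y :=
        ConcreteCategory.congr_hom (IsSplitMono.id (0 : L ⟶ C)) y
      rw [← hx, ← hy]
      rfl
    -- N is torsion
    have hNQ : N ∈ cotiltTors C := by
      intro f
      obtain ⟨χ, hχ, hχu⟩ := hlas.2 hCC (0 : L ⟶ C) h0ns
      have e1 : b ≫ f = χ := hχu _ (by
        show a ≫ b ≫ f = 0
        rw [← Category.assoc, w, Limits.zero_comp])
      have e2 : (0 : M ⟶ C) = χ := hχu _ Limits.comp_zero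
      have hbf : b ≫ f = 0 := by rw [e1, ← e2]
      apply ConcreteCategory.ext_apply
      intro n
      obtain ⟨m, rfl⟩ := hb n
      exact ConcreteCategory.congr_hom hbf m
    -- (ATF1)
    have hATF1 : ∀ N' : Submodule R N, N' ≠ ⊤ →
        ModuleCat.of R N' ∈ cotiltClass C := by
      intro N' hN'
      set M' : Submodule R M := Submodule.comap b.hom N' with hM'
      set Z : ModuleCat.{u} R := ModuleCat.of R ↥M' with hZdef
      have hZC : Ext1Vanish Z C :=
        ext1_mono_left hC (ModuleCat.ofHom M'.subtype : Z ⟶ M) M'.injective_subtype hMC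
      set a' : L ⟶ Z := ModuleCat.ofHom (LinearMap.codRestrict M' a.hom (fun l => by
        show b (a l) ∈ N'
        rw [show b (a l) = 0 from ConcreteCategory.congr_hom w l]
        exact N'.zero_mem)) with ha'
      have hsm' : IsSplitMono a' := by
        by_contra hnsm
        obtain ⟨h', hh', _⟩ := hlas.2 hZC a' hnsm
        obtain ⟨χ, hχ, hχu⟩ := hlas.2 hMC a hlas.1
        have e1 : h' ≫ ModuleCat.ofHom M'.subtype = χ := hχu _ (by
          show a ≫ h' ≫ ModuleCat.ofHom M'.subtype = a
          rw [← Category.assoc, hh']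
          apply ConcreteCategory.ext_apply
          intro l
          rfl)
        have e2 : 𝟙 M = χ := hχu _ (Category.comp_id a)
        have hcomp : h' ≫ ModuleCat.ofHom M'.subtype = 𝟙 M := by rw [e1, ← e2]
        apply hN'
        rw [eq_top_iff]
        intro n _
        obtain ⟨m, rfl⟩ := hb n
        have hmM : m ∈ M' := by
          have hsm : M'.subtype (h' m) = m := ConcreteCategory.congr_hom hcomp m
          exact hsm ▸ (h' m).2
        exact hmM
      set b' : Z ⟶ ModuleCat.of R ↥N' :=
        ModuleCat.ofHom (LinearMap.codRestrict N' (b.hom.domRestrict M') (fun x => x.2))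
        with hb'def
      have hb's : Function.Surjective b' := by
        rintro ⟨n, hn⟩
        obtain ⟨m, rfl⟩ := hb n
        exact ⟨⟨m, hn⟩, rfl⟩
      have hk' : LinearMap.range a'.hom = LinearMap.ker b'.hom := by
        apply le_antisymm
        · rintro _ ⟨l, rfl⟩
          rw [LinearMap.mem_ker]
          apply Subtype.ext
          show b (a l) = 0
          exact ConcreteCategory.congr_hom w l
        · rintro ⟨m, hm⟩ hker
          have hbm : b m = 0 := congrArg Subtype.val hker
          have hmk : m ∈ LinearMap.ker b.hom := hbm
          rw [← hk] at hmk
          obtain ⟨l, rfl⟩ := hmk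
          exact ⟨l, Subtype.ext rfl⟩
      obtain ⟨s', hs'⟩ := sec_of_retr hb's hk' (retraction a') (IsSplitMono.id a')
      exact ext1_retract_left hZC s' b' hs'
    -- (ATF2)
    have hATF2 : ∀ (A B : ModuleCat.{u} R) (i : A ⟶ B) (p : B ⟶ N) (w' : i ≫ p = 0),
        (ShortComplex.mk i p w').ShortExact → B ∈ cotiltTors C →
          A ∈ cotiltTors C := by
      intro A B i p w' hSE' hBtors
      obtain ⟨hii, hps, hkk⟩ := sesData hSE'
      intro f
      set Pb : Submodule R (M × B) :=
        LinearMap.ker (b.hom.comp (LinearMap.fst R M B) -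
          p.hom.comp (LinearMap.snd R M B)) with hPb
      have hmem : ∀ v : ↑M × ↑B, v ∈ Pb ↔ b v.1 = p v.2 := by
        intro v
        rw [hPb, LinearMap.mem_ker, LinearMap.sub_apply, sub_eq_zero]
        exact Iff.rfl
      set P : ModuleCat.{u} R := ModuleCat.of R ↥Pb with hP
      set qM : P ⟶ M := ModuleCat.ofHom ((LinearMap.fst R M B).comp Pb.subtype) with hqM
      set qB : P ⟶ B := ModuleCat.ofHom ((LinearMap.snd R M B).comp Pb.subtype) with hqB
      set j : A ⟶ P := ModuleCat.ofHom (LinearMap.codRestrict Pb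
        (LinearMap.prod 0 i.hom) (fun x => (hmem _).2 (by
          show b 0 = p (i x)
          rw [map_zero]
          exact (ConcreteCategory.congr_hom w' x).symm))) with hj
      set uP : L ⟶ P := ModuleCat.ofHom (LinearMap.codRestrict Pb
        (LinearMap.prod a.hom 0) (fun l => (hmem _).2 (by
          show b (a l) = p 0
          rw [map_zero]
          exact ConcreteCategory.congr_hom w l))) with huP
      have hji : Function.Injective j := by
        intro x y hxy
        exact hii (congrArg (fun v => (Subtype.val v).2) hxy)
      have hqMs : Function.Surjective qM := by
        intro m
        obtain ⟨x, hx⟩ := hps (b m)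
        exact ⟨⟨(m, x), (hmem _).2 hx.symm⟩, rfl⟩
      have hkjM : LinearMap.range j.hom = LinearMap.ker qM.hom := by
        apply le_antisymm
        · rintro _ ⟨x, rfl⟩
          rw [LinearMap.mem_ker]
          rfl
        · rintro ⟨⟨m, xb⟩, hv⟩ hker
          have hm0 : m = 0 := hker
          have hpxb : p xb = 0 := by
            have := (hmem _).1 hv
            dsimp at this
            rw [hm0, map_zero] at this
            exact this.symm
          obtain ⟨x0, hx0⟩ := ses_exists_preimage hkk xb hpxb
          refine ⟨x0, Subtype.ext ?_⟩
          show ((0 : M), i x0) = (m, xb)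
          rw [hm0, hx0]
      have huPi : Function.Injective uP := by
        intro x y hxy
        exact ha (congrArg (fun v => (Subtype.val v).1) hxy)
      have hqBs : Function.Surjective qB := by
        intro x
        obtain ⟨m, hm⟩ := hb (p x)
        exact ⟨⟨(m, x), (hmem _).2 hm⟩, rfl⟩
      have hkuB : LinearMap.range uP.hom = LinearMap.ker qB.hom := by
        apply le_antisymm
        · rintro _ ⟨l, rfl⟩
          rw [LinearMap.mem_ker]
          rfl
        · rintro ⟨⟨m, xb⟩, hv⟩ hker
          have hxb0 : xb = 0 := hker
          have hbm : b m = 0 := by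
            have := (hmem _).1 hv
            dsimp at this
            rw [hxb0, map_zero] at this
            exact this
          have hmk : m ∈ LinearMap.ker b.hom := hbm
          rw [← hk] at hmk
          obtain ⟨l, hl⟩ := hmk
          refine ⟨l, Subtype.ext ?_⟩
          show (a l, (0 : B)) = (m, xb)
          rw [hl, hxb0]
      obtain ⟨g, hg⟩ := extend_of_ext1 hji hqMs hkjM hMC f
      by_cases hsm : IsSplitMono (uP ≫ g)
      · exfalso
        have hretr : uP ≫ (g ≫ retraction (uP ≫ g)) = 𝟙 L := by
          rw [← Category.assoc]
          exact IsSplitMono.id (uP ≫ g)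
        obtain ⟨sB, hsB⟩ := sec_of_retr hqBs hkuB (g ≫ retraction (uP ≫ g)) hretr
        have hsMzero : sB ≫ qM = 0 := hom_zero_of_tors hC hBtors hMC (sB ≫ qM)
        apply hlas.1
        have hasurj : Function.Surjective a := by
          intro m
          obtain ⟨w₀, hw₀⟩ := hqMs m
          have hker : w₀ - sB (qB w₀) ∈ LinearMap.ker qB.hom := by
            rw [LinearMap.mem_ker, map_sub]
            rw [show qB (sB (qB w₀)) = qB w₀ from ConcreteCategory.congr_hom hsB (qB w₀)]
            rw [sub_self]
          rw [← hkuB] at hker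
          obtain ⟨l, hl⟩ := hker
          refine ⟨l, ?_⟩
          have e1 : qM (uP l) = a l := rfl
          have e2 : qM (sB (qB w₀)) = 0 := ConcreteCategory.congr_hom hsMzero (qB w₀)
          calc a l = qM (uP l) := e1.symm
            _ = qM (w₀ - sB (qB w₀)) := by rw [hl]
            _ = qM w₀ - qM (sB (qB w₀)) := by rw [map_sub]
            _ = m := by rw [hw₀, e2, sub_zero]
        haveI := isIsoOfBijective a ⟨ha, hasurj⟩
        exact ⟨⟨⟨inv a, IsIso.hom_inv_id a⟩⟩⟩
      · obtain ⟨h₀, hh₀, _⟩ := hlas.2 hCC (uP ≫ g) hsm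
        obtain ⟨t, ht⟩ := fac qB hqBs (g - qM ≫ h₀) (by
          intro x hx
          rw [← hkuB] at hx
          obtain ⟨l, rfl⟩ := hx
          rw [LinearMap.mem_ker]
          show g (uP l) - h₀ (qM (uP l)) = 0
          have e1 : qM (uP l) = a l := rfl
          have e2 : h₀ (a l) = g (uP l) := ConcreteCategory.congr_hom hh₀ l
          rw [e1, e2, sub_self])
        have ht0 : t = 0 := hBtors t
        have hgeq : g = qM ≫ h₀ := by
          have hz : g - qM ≫ h₀ = 0 := by rw [← ht, ht0, Limits.comp_zero]
          exact sub_eq_zero.1 hz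
        apply ConcreteCategory.ext_apply
        intro x
        show f x = 0
        have e1 : g (j x) = f x := ConcreteCategory.congr_hom hg x
        have e2 : g (j x) = h₀ (qM (j x)) := ConcreteCategory.congr_hom hgeq (j x)
        have e3 : qM (j x) = 0 := rfl
        rw [← e1, e2, e3, map_zero]
    refine ⟨hNQ, ⟨hN, hATF1, hATF2⟩, hMC, (ModuleCat.epi_iff_surjective b).2 hb, ?_, ?_⟩
    · -- ker b ∈ perp1
      intro Y hY
      have hYL : Ext1Vanish Y L := ext1_memProd_right hY hLP
      exact ext1_retract_right hYL
        (show ModuleCat.of R (LinearMap.ker b.hom) ⟶ L from ModuleCat.ofHom hkerEquiv.symm.toLinearMap)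
        (show L ⟶ ModuleCat.of R (LinearMap.ker b.hom) from ModuleCat.ofHom hkerEquiv.toLinearMap)
        (ConcreteCategory.ext_apply fun x => hkerEquiv.apply_symm_apply x)
    · -- right minimality
      intro h hh
      exact right_minimal ha hb hk hN hMC hLC hlas h hh

end Paper
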